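/- arXiv:1002.2655 — 4 statements merged into one kernel-verified Lean document; each statement's English description precedes it below -/
import Mathlib

section
/- Let m be a positive integer, let α > 2 be real, let φ > 0 and r ≥ 1 be reals, and let ℓ(x) = x^{-α} for x ≥ 1 and ℓ(x) = 0 for 0 ≤ x < 1 be the truncated path-loss function. Then the integral over the closed disc B(0, r) ⊂ ℝ² (with respect to two-dimensional Lebesgue measure) satisfies ∫_{B(0,r)} [ 1 - (1 + (φ/m) · ℓ(|X|))^{-m} ] dX = π · (2/α) · (φ/m)^{2/α} · Σ_{j=0}^{m-1} C(m, j) · ∫_{m/φ}^{m r^α / φ} t^{j - 1 + 2/α} / (1 + t)^m dt, where C(m, j) is the binomial coefficient. -/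
open MeasureTheory Real

/-- The truncated path-loss function: `ℓ(x) = x^{-α}` for `x ≥ 1` and `0` otherwise. -/
noncomputable def pathLoss (α : ℝ) (x : ℝ) : ℝ := if 1 ≤ x then x ^ (-α) else 0

/-- Auxiliary integrand. -/
noncomputable def Fphi (m : ℕ) (α φ : ℝ) (y : ℝ) : ℝ :=
  1 - (1 + (φ / m) * pathLoss α y) ^ (-(m : ℝ))

lemma Fphi_eq_zero (m : ℕ) (α φ : ℝ) {y : ℝ} (hy : y < 1) : Fphi m α φ y = 0 := by
  simp [Fphi, pathLoss, not_le.mpr hy]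

/-- Radial reduction: the disc integral equals `2π ∫_1^r y F(y) dy`. -/
lemma aux_radial (m : ℕ) (α φ : ℝ) (r : ℝ) (hr : 1 ≤ r) :
    ∫ X in Metric.closedBall (0 : EuclideanSpace ℝ (Fin 2)) r, Fphi m α φ ‖X‖
      = 2 * π * ∫ y in (1:ℝ)..r, y * Fphi m α φ y := by
  have hind : (∫ X in Metric.closedBall (0 : EuclideanSpace ℝ (Fin 2)) r, Fphi m α φ ‖X‖)
      = ∫ X : EuclideanSpace ℝ (Fin 2), Set.indicator (Set.Iic r) (Fphi m α φ) ‖X‖ := by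
    rw [← integral_indicator measurableSet_closedBall]
    congr 1
    ext X
    by_cases h : ‖X‖ ≤ r <;>
      simp [Set.indicator_apply, mem_closedBall_zero_iff, h]
  rw [hind, integral_fun_norm_addHaar (volume : Measure (EuclideanSpace ℝ (Fin 2)))
    (Set.indicator (Set.Iic r) (Fphi m α φ))]
  have hdim : Module.finrank ℝ (EuclideanSpace ℝ (Fin 2)) = 2 := by simp
  rw [hdim]
  have hvol : (volume (Metric.ball (0 : EuclideanSpace ℝ (Fin 2)) 1)).toReal = π := by
    rw [EuclideanSpace.volume_ball]
    norm_num [Real.Gamma_two, sq_sqrt Real.pi_pos.le, Real.pi_pos.le]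
  rw [measureReal_def, hvol]
  have hioi : (∫ y in Set.Ioi (0:ℝ), y ^ (2 - 1) • Set.indicator (Set.Iic r) (Fphi m α φ) y)
      = ∫ y in (1:ℝ)..r, y * Fphi m α φ y := by
    rw [intervalIntegral.integral_of_le hr]
    have h1 : (volume.restrict (Set.Ioi (0:ℝ))) ({(1:ℝ)} : Set ℝ) = 0 := by
      rw [Measure.restrict_apply (measurableSet_singleton _)]
      exact measure_mono_null Set.inter_subset_left (measure_singleton _)
    have hae : (fun y : ℝ => y ^ (2 - 1) • Set.indicator (Set.Iic r) (Fphi m α φ) y)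
        =ᵐ[volume.restrict (Set.Ioi (0:ℝ))]
          Set.indicator (Set.Ioc 1 r) (fun s => s * Fphi m α φ s) := by
      filter_upwards [ae_restrict_mem measurableSet_Ioi, compl_mem_ae_iff.mpr h1]
        with y hy hy1
      simp only [Set.mem_compl_iff, Set.mem_singleton_iff] at hy1
      rcases lt_or_gt_of_ne hy1 with h | h
      · rw [Set.indicator_of_mem (Set.mem_Iic.mpr (h.le.trans hr)),
          Set.indicator_of_notMem (by simp [Set.mem_Ioc, not_lt.mpr h.le]),
          Fphi_eq_zero m α φ h]
        simp
      · by_cases hyr : y ≤ r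
        · rw [Set.indicator_of_mem (Set.mem_Iic.mpr hyr),
            Set.indicator_of_mem (Set.mem_Ioc.mpr ⟨h, hyr⟩)]
          simp
        · rw [Set.indicator_of_notMem (by simpa using hyr),
            Set.indicator_of_notMem (by simp [Set.mem_Ioc, hyr])]
          simp
    have hsub : Set.Ioc (1:ℝ) r ∩ Set.Ioi 0 = Set.Ioc 1 r :=
      Set.inter_eq_left.mpr fun y hy => lt_trans zero_lt_one hy.1
    rw [integral_congr_ae hae, integral_indicator measurableSet_Ioc,
      Measure.restrict_restrict measurableSet_Ioc, hsub]
  rw [hioi]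
  simp only [nsmul_eq_mul, smul_eq_mul, Nat.cast_ofNat]
  ring

lemma aux_subst (m : ℕ) (hm : 0 < m) (α : ℝ) (hα : 2 < α)
    (φ : ℝ) (hφ : 0 < φ) (r : ℝ) (hr : 1 ≤ r) :
    ∫ y in (1:ℝ)..r, y * Fphi m α φ y
      = α⁻¹ * (φ / m) ^ (2 / α) * ∑ j ∈ Finset.range m, (m.choose j : ℝ) *
          ∫ t in ((m : ℝ) / φ)..((m : ℝ) * r ^ α / φ),
            t ^ ((j : ℝ) - 1 + 2 / α) / (1 + t) ^ m := by
  have hm' : (0:ℝ) < m := Nat.cast_pos.mpr hm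
  have hα0 : (0:ℝ) < α := by linarith
  set f : ℝ → ℝ := fun y => (m : ℝ) * y ^ α / φ with hf
  set f' : ℝ → ℝ := fun y => (m : ℝ) * (α * y ^ (α - 1)) / φ with hf'
  set g : ℝ → ℝ := fun t =>
    α⁻¹ * (φ / m) ^ (2 / α) * (t ^ (2 / α - 1) * (((1 + t) ^ m - t ^ m) / (1 + t) ^ m)) with hg
  -- positivity of f on positives
  have hfpos : ∀ y : ℝ, 0 < y → 0 < f y := fun y hy => by
    simp only [hf]; positivity
  have himg : f '' (Set.uIcc (1:ℝ) r) ⊆ Set.Ioi (0:ℝ) := by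
    rintro _ ⟨y, hy, rfl⟩
    rw [Set.uIcc_of_le hr] at hy
    exact hfpos y (by linarith [hy.1])
  -- derivative
  have hderiv : ∀ y ∈ Set.uIcc (1:ℝ) r, HasDerivAt f (f' y) y := by
    intro y hy
    rw [Set.uIcc_of_le hr] at hy
    have hy0 : (0:ℝ) < y := by linarith [hy.1]
    simpa [hf, hf', mul_div_assoc] using
      ((Real.hasDerivAt_rpow_const (x := y) (p := α) (Or.inl hy0.ne')).const_mul
        (m : ℝ)).div_const φ
  have hf'cont : ContinuousOn f' (Set.uIcc (1:ℝ) r) := by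
    apply ContinuousOn.div_const
    apply ContinuousOn.mul continuousOn_const
    apply ContinuousOn.mul continuousOn_const
    apply ContinuousOn.rpow_const continuousOn_id
    intro y hy
    rw [Set.uIcc_of_le hr] at hy
    exact Or.inl (by simp; linarith [hy.1])
  have hgcont : ContinuousOn g (f '' Set.uIcc (1:ℝ) r) := by
    apply ContinuousOn.mono _ himg
    apply ContinuousOn.mul continuousOn_const
    apply ContinuousOn.mul
    · apply ContinuousOn.rpow_const continuousOn_id
      intro t ht
      exact Or.inl (ne_of_gt (by simpa using ht))
    · apply ContinuousOn.div
      · fun_prop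
      · fun_prop
      · intro t ht
        have : (0:ℝ) < t := by simpa using ht
        positivity
  have hsub := intervalIntegral.integral_comp_smul_deriv' hderiv hf'cont hgcont
  have hB : ∀ y ∈ Set.uIcc (1:ℝ) r, f' y • (g ∘ f) y = y * Fphi m α φ y := by
    intro y hy
    rw [Set.uIcc_of_le hr] at hy
    have hy1 : (1:ℝ) ≤ y := hy.1
    have hy0 : (0:ℝ) < y := by linarith
    have hyα : (0:ℝ) < y ^ α := Real.rpow_pos_of_pos hy0 α
    set t := f y with htdef
    have ht : 0 < t := hfpos y hy0
    have h1t : (0:ℝ) < 1 + t := by linarith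
    have hB1 : 1 + (φ / m) * y ^ (-α) = (1 + t) / t := by
      rw [Real.rpow_neg hy0.le, htdef]
      simp only [hf]
      field_simp
      ring
    have hB2 : ((1 + t) / t) ^ (-(m:ℝ)) = t ^ m / (1 + t) ^ m := by
      rw [Real.rpow_neg (by positivity), Real.rpow_natCast, div_pow, inv_div]
    have hFeq : Fphi m α φ y = ((1 + t) ^ m - t ^ m) / (1 + t) ^ m := by
      rw [Fphi, pathLoss, if_pos hy1, hB1, hB2, sub_div, div_self (pow_ne_zero _ h1t.ne')]
    have e1 : t ^ (2 / α - 1) = (φ / m) ^ (1 - 2 / α) * y ^ (2 - α) := by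
      have ht_eq : t = (φ / m)⁻¹ * y ^ α := by
        rw [htdef]; simp only [hf]; field_simp
      rw [ht_eq, Real.mul_rpow (by positivity) hyα.le,
        Real.inv_rpow (by positivity), ← Real.rpow_neg (by positivity),
        ← Real.rpow_mul hy0.le,
        show -(2/α-1) = 1 - 2/α by ring,
        show α * (2/α-1) = 2 - α by field_simp]
    have e2 : (φ/m) ^ (2/α) * (φ/m) ^ (1 - 2/α) = φ/m := by
      rw [← Real.rpow_add (by positivity), show 2/α + (1-2/α) = (1:ℝ) by ring, Real.rpow_one]
    have e3 : y ^ (α-1) * y ^ (2-α) = y := by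
      rw [← Real.rpow_add hy0, show α-1+(2-α) = (1:ℝ) by ring, Real.rpow_one]
    have hpow : (m:ℝ) * (α * y ^ (α-1)) / φ * (α⁻¹ * ((φ/m) ^ (2/α) * t ^ (2/α-1))) = y := by
      rw [e1, show (m:ℝ) * (α * y ^ (α-1)) / φ *
          (α⁻¹ * ((φ/m) ^ (2/α) * ((φ/m) ^ (1-2/α) * y ^ (2-α))))
        = (α * α⁻¹) * (((φ/m) ^ (2/α) * (φ/m) ^ (1-2/α)) * ((m:ℝ)/φ)) * (y ^ (α-1) * y ^ (2-α))
        by ring, e2, e3, mul_inv_cancel₀ hα0.ne']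
      field_simp
    show f' y * g (f y) = y * Fphi m α φ y
    rw [hFeq, ← htdef]
    simp only [hf', hg]
    rw [show (m:ℝ) * (α * y ^ (α-1)) / φ *
        (α⁻¹ * (φ/m) ^ (2/α) * (t ^ (2/α-1) * (((1+t)^m - t^m)/(1+t)^m)))
      = ((m:ℝ) * (α * y ^ (α-1)) / φ * (α⁻¹ * ((φ/m) ^ (2/α) * t ^ (2/α-1))))
        * (((1+t)^m - t^m)/(1+t)^m) by ring, hpow]
  have hleft : ∫ y in (1:ℝ)..r, y * Fphi m α φ y = ∫ t in (f 1)..(f r), g t := by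
    rw [← hsub]
    exact intervalIntegral.integral_congr fun y hy => (hB y hy).symm
  have hf1 : f 1 = (m:ℝ)/φ := by simp [hf]
  have hfr : f r = (m:ℝ) * r ^ α / φ := rfl
  rw [hleft, hf1, hfr]
  have ha : (0:ℝ) < (m:ℝ)/φ := div_pos hm' hφ
  have hab : (m:ℝ)/φ ≤ (m:ℝ)*r^α/φ := by
    have h1 : (1:ℝ) ≤ r ^ α := by
      calc (1:ℝ) = 1 ^ α := (Real.one_rpow α).symm
      _ ≤ r ^ α := Real.rpow_le_rpow zero_le_one hr hα0.le
    calc (m:ℝ)/φ = (m:ℝ)*1/φ := by ring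
    _ ≤ (m:ℝ)*r^α/φ := by gcongr
  have hA : Set.EqOn g (fun t => α⁻¹ * (φ/m) ^ (2/α) * ∑ j ∈ Finset.range m,
      (m.choose j : ℝ) * (t ^ ((j:ℝ)-1+2/α) / (1+t)^m))
      (Set.uIcc ((m:ℝ)/φ) ((m:ℝ)*r^α/φ)) := by
    intro t ht
    rw [Set.uIcc_of_le hab] at ht
    have ht0 : (0:ℝ) < t := lt_of_lt_of_le ha ht.1
    have hbin : ((1+t):ℝ)^m - t^m = ∑ j ∈ Finset.range m, (m.choose j : ℝ) * t ^ j := by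
      have h := add_pow t (1:ℝ) m
      rw [Finset.sum_range_succ, Nat.choose_self] at h
      simp only [one_pow, mul_one, Nat.cast_one] at h
      rw [add_comm t 1] at h
      rw [h, add_sub_cancel_right]
      exact Finset.sum_congr rfl fun j _ => mul_comm _ _
    simp only [hg]
    rw [hbin, Finset.sum_div, Finset.mul_sum, Finset.mul_sum, Finset.mul_sum]
    apply Finset.sum_congr rfl
    intro j _
    have hrp : t ^ (2/α-1) * t ^ (j:ℕ) = t ^ ((j:ℝ)-1+2/α) := by
      rw [← Real.rpow_natCast t j, ← Real.rpow_add ht0]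
      congr 1; ring
    rw [show α⁻¹ * (φ/m) ^ (2/α) * (t ^ (2/α-1) * ((m.choose j:ℝ) * t^(j:ℕ) / (1+t)^m))
      = α⁻¹ * (φ/m) ^ (2/α) * ((m.choose j:ℝ) * ((t ^ (2/α-1) * t^(j:ℕ))/(1+t)^m)) by ring, hrp]
  have hint : ∀ j ∈ Finset.range m, IntervalIntegrable
      (fun t => (m.choose j : ℝ) * (t ^ ((j:ℝ)-1+2/α) / (1+t)^m)) volume
      ((m:ℝ)/φ) ((m:ℝ)*r^α/φ) := by
    intro j _
    apply ContinuousOn.intervalIntegrable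
    apply ContinuousOn.mul continuousOn_const
    apply ContinuousOn.div
    · apply ContinuousOn.rpow_const continuousOn_id
      intro t ht
      rw [Set.uIcc_of_le hab] at ht
      exact Or.inl (ne_of_gt (lt_of_lt_of_le ha ht.1))
    · fun_prop
    · intro t ht
      rw [Set.uIcc_of_le hab] at ht
      have : (0:ℝ) < t := lt_of_lt_of_le ha ht.1
      positivity
  rw [intervalIntegral.integral_congr hA]
  rw [intervalIntegral.integral_const_mul, intervalIntegral.integral_finset_sum hint]
  congr 1
  exact Finset.sum_congr rfl fun j _ => intervalIntegral.integral_const_mul _ _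

/-- Evaluation of `π·Δ₁(φ, r)`: the integral over the closed disc `B(0,r) ⊂ ℝ²` of
`1 - (1 + (φ/m)·ℓ(|X|))^{-m}` equals
`π·(2/α)·(φ/m)^{2/α} · Σ_{j=0}^{m-1} C(m,j) ∫_{m/φ}^{m r^α/φ} t^{j-1+2/α}/(1+t)^m dt`. -/
theorem disc_integral_Delta1 (m : ℕ) (hm : 0 < m) (α : ℝ) (hα : 2 < α)
    (φ : ℝ) (hφ : 0 < φ) (r : ℝ) (hr : 1 ≤ r) :
    ∫ X in Metric.closedBall (0 : EuclideanSpace ℝ (Fin 2)) r,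
        (1 - (1 + (φ / m) * pathLoss α ‖X‖) ^ (-(m : ℝ))) =
      Real.pi * (2 / α) * (φ / m) ^ (2 / α) *
        ∑ j ∈ Finset.range m, (m.choose j : ℝ) *
          ∫ t in ((m : ℝ) / φ)..((m : ℝ) * r ^ α / φ),
            t ^ ((j : ℝ) - 1 + 2 / α) / (1 + t) ^ m := by
  show (∫ X in Metric.closedBall (0 : EuclideanSpace ℝ (Fin 2)) r, Fphi m α φ ‖X‖) = _
  rw [aux_radial m α φ r hr, aux_subst m hm α hα φ hφ r hr]
  ring
end

section
/- Let m be a positive integer, let α > 2 be real, let φ be real with 0 < φ < m, let r ≥ 1 be real, and let ℓ(x) = x^{-α} for x ≥ 1 and ℓ(x) = 0 for 0 ≤ x < 1 be the truncated path-loss function. Then the integral over the closed disc B(0, r) ⊂ ℝ² (with respect to two-dimensional Lebesgue measure) satisfies ∫_{B(0,r)} [ (1 - (φ/m) · ℓ(|X|))^{-m} - 1 ] dX = π · (2/α) · (φ/m)^{2/α} · Σ_{j=0}^{m-1} (-1)^{j+1} · C(m, j) · ∫_{m/φ}^{m r^α / φ} t^{j - 1 + 2/α} / (1 - t)^m dt,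 where C(m, j) is the binomial coefficient. -/
open MeasureTheory Real

private lemma sum_id' (m : ℕ) (t : ℝ) :
    ∑ j ∈ Finset.range m, (-1:ℝ)^(j+1) * (m.choose j : ℝ) * t^j
      = (-1:ℝ)^m * (t^m - (t-1)^m) := by
  have h := add_pow t (-1:ℝ) m
  rw [Finset.sum_range_succ] at h
  simp only [Nat.choose_self, Nat.cast_one, Nat.sub_self, pow_zero] at h
  have ht : t - 1 = t + (-1) := by ring
  rw [ht, h]
  rw [show (-1:ℝ)^m * (t^m - (∑ x ∈ Finset.range m, t ^ x * (-1:ℝ) ^ (m - x) * (m.choose x : ℝ) + t ^ m * 1 * 1))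
      = ∑ x ∈ Finset.range m, (-1:ℝ)^m * -(t ^ x * (-1:ℝ) ^ (m - x) * (m.choose x : ℝ)) by
    rw [← Finset.mul_sum, Finset.sum_neg_distrib]; ring]
  refine Finset.sum_congr rfl fun j hj => ?_
  have hj' : j ≤ m := le_of_lt (Finset.mem_range.mp hj)
  have h2 : (-1:ℝ)^(m-j) * (-1:ℝ)^j = (-1:ℝ)^m := by rw [← pow_add, Nat.sub_add_cancel hj']
  have e3 : (-1:ℝ)^(m-j) * (-1:ℝ)^(m-j) = 1 := by
    rw [← pow_add, ← two_mul, pow_mul]; norm_num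
  rw [pow_succ, ← h2]
  linear_combination ((-1:ℝ)^j * (m.choose j : ℝ) * t^j) * e3

private lemma pointwise' (m : ℕ) (hm : 0 < m) (α : ℝ) (hα : 2 < α)
    (φ : ℝ) (hφ0 : 0 < φ) (hφm : φ < m) (x : ℝ) (hx : 1 ≤ x) :
    2 * π * (x * ((1 - (φ/m) * x ^ (-α)) ^ (-(m:ℝ)) - 1)) =
    π * (2/α) * (φ/m) ^ (2/α) *
      ∑ j ∈ Finset.range m, (-1:ℝ)^(j+1) * (m.choose j : ℝ) *
        (((m:ℝ) * (α * x ^ (α-1)) / φ) *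
          (((m:ℝ) * x^α/φ) ^ ((j:ℝ)-1+2/α) / (1 - (m:ℝ)*x^α/φ)^m)) := by
  have hx0 : (0:ℝ) < x := lt_of_lt_of_le one_pos hx
  have hα0 : (0:ℝ) < α := by linarith
  have hm0 : (0:ℝ) < (m:ℝ) := by exact_mod_cast hm
  have hA1 : 1 ≤ x ^ α := Real.one_le_rpow hx hα0.le
  have hA0 : (0:ℝ) < x ^ α := by linarith
  set t : ℝ := (m:ℝ) * x^α / φ with htdef
  have ht1 : 1 < t := by
    have : (m:ℝ)/φ ≤ t := by
      rw [htdef]; rw [div_le_div_iff₀ hφ0 hφ0]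
      nlinarith [mul_nonneg (mul_nonneg hm0.le hφ0.le) (sub_nonneg.mpr hA1)]
    have h2 : 1 < (m:ℝ)/φ := (one_lt_div hφ0).mpr hφm
    linarith
  have ht0 : (0:ℝ) < t := by linarith
  have hs0 : (0:ℝ) < t - 1 := by linarith
  have e1 : 1 - (φ/(m:ℝ)) * x ^ (-α) = (t-1)/t := by
    rw [Real.rpow_neg hx0.le, htdef]
    field_simp
  have e2 : ((t-1)/t) ^ (-(m:ℝ)) = t^m / (t-1)^m := by
    rw [Real.rpow_neg (by positivity), Real.rpow_natCast, div_pow, inv_div]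
  have e4 : (1-t)^m = (-1:ℝ)^m * (t-1)^m := by rw [← neg_sub t 1, neg_pow]
  have e5 : x ^ (α-1) = x^α / x := by rw [Real.rpow_sub hx0, Real.rpow_one]
  have e6 : (φ/(m:ℝ))^(2/α) * t^(2/α) = x * x := by
    rw [← Real.mul_rpow (by positivity) ht0.le]
    have h7 : (φ/(m:ℝ)) * t = x ^ α := by rw [htdef]; field_simp
    rw [h7, ← Real.rpow_mul hx0.le]
    have h8 : α * (2/α) = 2 := by field_simp
    rw [h8, show (2:ℝ)=((2:ℕ):ℝ) by norm_num, Real.rpow_natCast]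
    ring
  have e7 : (-1:ℝ)^m * (-1:ℝ)^m = 1 := by
    rw [← mul_pow]; norm_num
  have esum : ∀ j ∈ Finset.range m,
      (-1:ℝ)^(j+1) * (m.choose j : ℝ) *
        (((m:ℝ) * (α * x ^ (α-1)) / φ) * (t ^ ((j:ℝ)-1+2/α) / (1 - t)^m))
      = (((m:ℝ) * (α * x ^ (α-1)) / φ) * (t^(2/α) * t⁻¹ / (1 - t)^m)) *
          ((-1:ℝ)^(j+1) * (m.choose j : ℝ) * t^j) := by
    intro j hj
    have : t ^ ((j:ℝ)-1+2/α) = t^j * (t^(2/α) * t⁻¹) := by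
      rw [show (j:ℝ)-1+2/α = (j:ℝ) + 2/α + (-1:ℝ) by ring, Real.rpow_add ht0,
        Real.rpow_add ht0, Real.rpow_natCast, Real.rpow_neg_one]; ring
    rw [this]; ring
  rw [e1, e2, Finset.sum_congr rfl esum, ← Finset.mul_sum, sum_id', e4, e5]
  have hP : (t-1)^m ≠ 0 := pow_ne_zero _ (by linarith)
  have htp : φ * t = (m:ℝ) * x ^ α := by rw [htdef]; field_simp
  field_simp
  linear_combination (t^m-(t-1)^m) *
    ((x*x) * htp - ((m:ℝ)*x^α) * e6)

private lemma subst_lemma' (m : ℕ) (hm : 0 < m) (α : ℝ) (hα : 2 < α)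
    (φ : ℝ) (hφ0 : 0 < φ) (hφm : φ < m) (r : ℝ) (hr : 1 ≤ r) (j : ℕ) :
    ∫ x in (1:ℝ)..r, ((m:ℝ)*(α*x^(α-1))/φ) *
        (((m:ℝ)*x^α/φ) ^ ((j:ℝ)-1+2/α) / (1 - (m:ℝ)*x^α/φ)^m)
      = ∫ t in ((m:ℝ)/φ)..((m:ℝ)*r^α/φ), t ^ ((j:ℝ)-1+2/α) / (1-t)^m := by
  have hm0 : (0:ℝ) < (m:ℝ) := by exact_mod_cast hm
  have hα0 : (0:ℝ) < α := by linarith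
  have huIcc : Set.uIcc (1:ℝ) r = Set.Icc 1 r := Set.uIcc_of_le hr
  have hderiv : ∀ x ∈ Set.uIcc (1:ℝ) r,
      HasDerivAt (fun x : ℝ => (m:ℝ)*x^α/φ) ((m:ℝ)*(α*x^(α-1))/φ) x := by
    intro x hx
    rw [huIcc] at hx
    have hx0 : (0:ℝ) < x := lt_of_lt_of_le one_pos hx.1
    exact ((Real.hasDerivAt_rpow_const (Or.inl hx0.ne')).const_mul (m:ℝ)).div_const φ
  have hcontf' : ContinuousOn (fun x : ℝ => (m:ℝ)*(α*x^(α-1))/φ) (Set.uIcc (1:ℝ) r) := by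
    intro x hx
    rw [huIcc] at hx
    have hx0 : (0:ℝ) < x := lt_of_lt_of_le one_pos hx.1
    have h1 : ContinuousAt (fun k : ℝ => k ^ (α-1)) x :=
      Real.continuousAt_rpow_const x (α-1) (Or.inl hx0.ne')
    have h2 : ContinuousAt (fun k : ℝ => (m:ℝ)*(α*k^(α-1))/φ) x :=
      ((h1.const_mul α).const_mul (m:ℝ)).div_const φ
    exact h2.continuousWithinAt
  have himg : ∀ t ∈ (fun x : ℝ => (m:ℝ)*x^α/φ) '' Set.uIcc (1:ℝ) r, 1 < t := by
    rintro t ⟨x, hx, rfl⟩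
    rw [huIcc] at hx
    have hx0 : (0:ℝ) < x := lt_of_lt_of_le one_pos hx.1
    have hA1 : 1 ≤ x ^ α := Real.one_le_rpow hx.1 hα0.le
    rw [lt_div_iff₀ hφ0]
    nlinarith
  have hcontg : ContinuousOn (fun t : ℝ => t ^ ((j:ℝ)-1+2/α) / (1-t)^m)
      ((fun x : ℝ => (m:ℝ)*x^α/φ) '' Set.uIcc (1:ℝ) r) := by
    intro t ht
    have h1t := himg t ht
    refine ContinuousWithinAt.div ?_ ?_ (pow_ne_zero _ (by linarith))
    · have h1 : ContinuousAt (fun s : ℝ => s ^ ((j:ℝ)-1+2/α)) t :=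
        Real.continuousAt_rpow_const t _ (Or.inl (by linarith))
      exact h1.continuousWithinAt
    · exact ((continuous_const.sub continuous_id).pow m).continuousWithinAt
  have key := intervalIntegral.integral_comp_smul_deriv' hderiv hcontf' hcontg
  simp only [smul_eq_mul, Function.comp_apply] at key
  rw [key]
  norm_num [Real.one_rpow]

/-- Evaluation of `π·Δ₂(φ, r)`: for `0 < φ < m`, the integral over the closed disc
`B(0,r) ⊂ ℝ²` of `(1 - (φ/m)·ℓ(|X|))^{-m} - 1` equals
`π·(2/α)·(φ/m)^{2/α} · Σ_{j=0}^{m-1} (-1)^{j+1} C(m,j) ∫_{m/φ}^{m r^α/φ} t^{j-1+2/α}/(1-t)^m dt`. -/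
theorem disc_integral_Delta2 (m : ℕ) (hm : 0 < m) (α : ℝ) (hα : 2 < α)
    (φ : ℝ) (hφ0 : 0 < φ) (hφm : φ < m) (r : ℝ) (hr : 1 ≤ r) :
    ∫ X in Metric.closedBall (0 : EuclideanSpace ℝ (Fin 2)) r,
        ((1 - (φ / m) * pathLoss α ‖X‖) ^ (-(m : ℝ)) - 1) =
      Real.pi * (2 / α) * (φ / m) ^ (2 / α) *
        ∑ j ∈ Finset.range m, (-1 : ℝ) ^ (j + 1) * (m.choose j : ℝ) *
          ∫ t in ((m : ℝ) / φ)..((m : ℝ) * r ^ α / φ),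
            t ^ ((j : ℝ) - 1 + 2 / α) / (1 - t) ^ m := by
  have hm0 : (0:ℝ) < (m:ℝ) := by exact_mod_cast hm
  have hα0 : (0:ℝ) < α := by linarith
  -- Step 1: reduce the disc integral to a radial interval integral
  set g : ℝ → ℝ := fun y => (1 - (φ / m) * pathLoss α y) ^ (-(m : ℝ)) - 1 with hg
  set G : ℝ → ℝ := fun y => if y ≤ r then g y else 0 with hG
  have step1 : (∫ X in Metric.closedBall (0 : EuclideanSpace ℝ (Fin 2)) r,
      ((1 - (φ / m) * pathLoss α ‖X‖) ^ (-(m : ℝ)) - 1)) = ∫ X : EuclideanSpace ℝ (Fin 2), G ‖X‖ := by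
    rw [← MeasureTheory.integral_indicator (measurableSet_closedBall)]
    refine integral_congr_ae (Filter.Eventually.of_forall fun X => ?_)
    by_cases h : ‖X‖ ≤ r
    · rw [Set.indicator_of_mem (by simpa [mem_closedBall_zero_iff] using h), hG]
      simp [h, hg]
    · rw [Set.indicator_of_notMem (by simpa [mem_closedBall_zero_iff] using h), hG]
      simp [h]
  rw [step1, MeasureTheory.integral_fun_norm_addHaar volume G]
  simp only [finrank_euclideanSpace, Fintype.card_fin]
  have hvol : (volume (Metric.ball (0:EuclideanSpace ℝ (Fin 2)) 1)).toReal = π := by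
    rw [EuclideanSpace.volume_ball]
    have h2 : Real.Gamma ((Fintype.card (Fin 2):ℝ) / 2 + 1) = 1 := by
      norm_num [Real.Gamma_two]
    rw [h2]
    simp [Real.sq_sqrt Real.pi_nonneg]
    positivity
  rw [measureReal_def, hvol]
  have hIoc : ∫ (y : ℝ) in Set.Ioi 0, y ^ (2 - 1) • G y
      = ∫ (y : ℝ) in Set.Ioc 1 r, y * ((1 - φ / ↑m * y ^ (-α)) ^ (-(m:ℝ)) - 1) := by
    rw [setIntegral_eq_of_subset_of_ae_diff_eq_zero measurableSet_Ioi.nullMeasurableSet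
      (fun y (hy : y ∈ Set.Ioc 1 r) => lt_trans one_pos hy.1)]
    · refine setIntegral_congr_fun measurableSet_Ioc fun y hy => ?_
      simp only [pow_one, smul_eq_mul, hG, hg, pathLoss, if_pos hy.2, if_pos hy.1.le]
      norm_num
    · have h1 : ∀ᵐ y : ℝ, y ≠ 1 := by
        refine ae_iff.mpr ?_
        simp only [ne_eq, not_not, Set.setOf_eq_eq_singleton]
        exact Real.volume_singleton
      filter_upwards [h1] with y hy1 hy
      obtain ⟨hy0, hy'⟩ := hy
      simp only [Set.mem_Ioc, not_and_or, not_le, not_lt] at hy'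
      rcases hy' with h | h
      · have hlt : y < 1 := lt_of_le_of_ne h hy1
        simp only [pow_one, smul_eq_mul, hG, hg, pathLoss, if_neg (not_le.mpr hlt)]
        by_cases hyr : y ≤ r <;> simp [hyr, Real.one_rpow]
      · simp only [pow_one, smul_eq_mul, hG, if_neg (not_le.mpr h), mul_zero]
  rw [hIoc, ← intervalIntegral.integral_of_le hr]
  simp only [nsmul_eq_mul, smul_eq_mul, Nat.cast_ofNat]
  -- Step 2: rewrite each RHS integral via substitution
  rw [show (∑ j ∈ Finset.range m, (-1 : ℝ) ^ (j + 1) * (m.choose j : ℝ) *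
          ∫ t in ((m : ℝ) / φ)..((m : ℝ) * r ^ α / φ),
            t ^ ((j : ℝ) - 1 + 2 / α) / (1 - t) ^ m)
      = ∑ j ∈ Finset.range m, (-1 : ℝ) ^ (j + 1) * (m.choose j : ℝ) *
          ∫ x in (1:ℝ)..r, ((m:ℝ)*(α*x^(α-1))/φ) *
            (((m:ℝ)*x^α/φ) ^ ((j:ℝ)-1+2/α) / (1 - (m:ℝ)*x^α/φ)^m) from
    Finset.sum_congr rfl fun j _ => by
      rw [subst_lemma' m hm α hα φ hφ0 hφm r hr j]]
  -- Step 3: integrability of each summand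
  have huIcc : Set.uIcc (1:ℝ) r = Set.Icc 1 r := Set.uIcc_of_le hr
  have hInt : ∀ j ∈ Finset.range m, IntervalIntegrable
      (fun x : ℝ => (-1 : ℝ) ^ (j + 1) * (m.choose j : ℝ) * (((m:ℝ)*(α*x^(α-1))/φ) *
        (((m:ℝ)*x^α/φ) ^ ((j:ℝ)-1+2/α) / (1 - (m:ℝ)*x^α/φ)^m))) volume 1 r := by
    intro j _
    apply ContinuousOn.intervalIntegrable
    intro x hx
    rw [huIcc] at hx
    have hx0 : (0:ℝ) < x := lt_of_lt_of_le one_pos hx.1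
    have hA1 : 1 ≤ x ^ α := Real.one_le_rpow hx.1 hα0.le
    have ht1 : 1 < (m:ℝ)*x^α/φ := by
      rw [lt_div_iff₀ hφ0]; nlinarith
    have c1 : ContinuousAt (fun k : ℝ => (m:ℝ)*(α*k^(α-1))/φ) x :=
      (((Real.continuousAt_rpow_const x (α-1) (Or.inl hx0.ne')).const_mul α).const_mul
        (m:ℝ)).div_const φ
    have c2 : ContinuousAt (fun k : ℝ => (m:ℝ)*k^α/φ) x :=
      ((Real.continuousAt_rpow_const x α (Or.inl hx0.ne')).const_mul (m:ℝ)).div_const φ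
    have c3 : ContinuousAt (fun s : ℝ => s ^ ((j:ℝ)-1+2/α)) ((m:ℝ)*x^α/φ) :=
      Real.continuousAt_rpow_const _ _ (Or.inl (by linarith))
    have c4 : ContinuousAt (fun k : ℝ =>
        ((m:ℝ)*k^α/φ) ^ ((j:ℝ)-1+2/α) / (1 - (m:ℝ)*k^α/φ)^m) x := by
      refine ContinuousAt.div (c2.rpow_const (Or.inl (by linarith)))
        ((continuousAt_const.sub c2).pow m) ?_
      exact pow_ne_zero _ (by linarith)
    have c5 : ContinuousAt (fun k : ℝ => (-1 : ℝ) ^ (j + 1) * (m.choose j : ℝ) *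
        (((m:ℝ)*(α*k^(α-1))/φ) *
          (((m:ℝ)*k^α/φ) ^ ((j:ℝ)-1+2/α) / (1 - (m:ℝ)*k^α/φ)^m))) x :=
      (c1.mul c4).const_mul _
    exact c5.continuousWithinAt
  have hL : 2 * (π * ∫ x in (1:ℝ)..r, x * ((1 - φ / ↑m * x ^ (-α)) ^ (-(m:ℝ)) - 1))
      = ∫ x in (1:ℝ)..r, (2*π) * (x * ((1 - φ / ↑m * x ^ (-α)) ^ (-(m:ℝ)) - 1)) := by
    rw [intervalIntegral.integral_const_mul]; ring
  have hsum : (∑ j ∈ Finset.range m, (-1 : ℝ) ^ (j + 1) * (m.choose j : ℝ) *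
        ∫ x in (1:ℝ)..r, ((m:ℝ)*(α*x^(α-1))/φ) *
          (((m:ℝ)*x^α/φ) ^ ((j:ℝ)-1+2/α) / (1 - (m:ℝ)*x^α/φ)^m))
      = ∫ x in (1:ℝ)..r, ∑ j ∈ Finset.range m, (-1 : ℝ) ^ (j + 1) * (m.choose j : ℝ) *
          (((m:ℝ)*(α*x^(α-1))/φ) *
            (((m:ℝ)*x^α/φ) ^ ((j:ℝ)-1+2/α) / (1 - (m:ℝ)*x^α/φ)^m)) := by
    rw [intervalIntegral.integral_finset_sum hInt]
    exact Finset.sum_congr rfl fun j _ => (intervalIntegral.integral_const_mul _ _).symm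
  rw [hL, hsum, ← intervalIntegral.integral_const_mul]
  refine intervalIntegral.integral_congr fun x hx => ?_
  rw [huIcc] at hx
  have hpt := pointwise' m hm α hα φ hφ0 hφm x hx.1
  rw [show (2*π) * (x * ((1 - φ / ↑m * x ^ (-α)) ^ (-(m:ℝ)) - 1))
      = 2 * π * (x * ((1 - φ/↑m * x ^ (-α)) ^ (-(m:ℝ)) - 1)) by ring, hpt]
end

section
/- Let μ be a finite Borel measure on [0, ∞), let m ≥ 1 be an integer, and define the Laplace transform L(a) = ∫_0^∞ e^{-a w} dμ(w) for a > 0. Then for every a > 0, ∫_0^∞ Γ(m, a w) dμ(w) = (-1)^{m-1} · a^m · D^{(m-1)}[ s ↦ L(s)/s ](a), where Γ(m, x) = ∫_x^∞ t^{m-1} e^{-t} dt is the upper incomplete Gamma function and D^{(m-1)} denotes the (m-1)-st derivative evaluated at a. -/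
open MeasureTheory Real

/-- The upper incomplete Gamma function `Γ(m, x) = ∫_x^∞ t^{m-1} e^{-t} dt`
for a positive integer `m`. -/
noncomputable def upperIncGamma (m : ℕ) (x : ℝ) : ℝ :=
  ∫ t in Set.Ioi x, t ^ (m - 1) * Real.exp (-t)

open Set Filter Topology

noncomputable def phiAux (k : ℕ) (s w : ℝ) : ℝ := ∫ t in Set.Ioi w, t ^ k * Real.exp (-(s * t))

lemma integrableOn_pow_mul_exp (k : ℕ) {s : ℝ} (hs : 0 < s) (w : ℝ) :
    IntegrableOn (fun t : ℝ => t ^ k * Real.exp (-(s * t))) (Set.Ioi w) := by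
  apply integrable_of_isBigO_exp_neg (half_pos hs)
    ((continuous_pow k).mul (by fun_prop)).continuousOn
  rw [Asymptotics.isBigO_iff]
  refine ⟨1, ?_⟩
  have h0 := (tendsto_pow_mul_exp_neg_atTop_nhds_zero k).comp
    (tendsto_id.const_mul_atTop (half_pos hs))
  have h1 : Tendsto (fun t : ℝ => t ^ k * Real.exp (-(s / 2 * t))) atTop (𝓝 0) := by
    have := h0.const_mul ((2 / s) ^ k)
    rw [mul_zero] at this
    refine this.congr' ?_
    filter_upwards [eventually_ge_atTop (0:ℝ)] with t ht
    simp only [Function.comp]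
    simp only [Function.comp, id]
    rw [mul_pow]
    field_simp
    have e1 : s ^ k * s⁻¹ ^ k = 1 := by rw [← mul_pow, mul_inv_cancel₀ hs.ne', one_pow]
    have e2 : (1 / 2 : ℝ) ^ k * 2 ^ k = 1 := by rw [← mul_pow]; norm_num
    linear_combination (t ^ k * (1 / 2) ^ k * 2 ^ k) * e1 + t ^ k * e2
  have h2 := h1.eventually (Metric.ball_mem_nhds (0:ℝ) one_pos)
  filter_upwards [h2, eventually_ge_atTop (0:ℝ)] with t ht ht0
  rw [Real.dist_eq, sub_zero] at ht
  have he : Real.exp (-(s * t)) = Real.exp (-(s/2 * t)) * Real.exp (-(s/2*t)) := by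
    rw [← Real.exp_add]; ring_nf
  have hn : ‖rexp (-(s / 2) * t)‖ = rexp (-(s / 2 * t)) := by
    rw [Real.norm_eq_abs, abs_exp]; ring_nf
  simp only [Pi.mul_apply]
  rw [hn, he, one_mul, ← mul_assoc, Real.norm_eq_abs, abs_of_nonneg (by positivity)]
  exact mul_le_of_le_one_left (exp_pos _).le (by
    calc t ^ k * Real.exp (-(s/2*t)) ≤ |t ^ k * Real.exp (-(s/2*t))| := le_abs_self _
    _ ≤ 1 := ht.le)

lemma phiAux_nonneg (k : ℕ) {s w : ℝ} (hw : 0 ≤ w) : 0 ≤ phiAux k s w :=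
  setIntegral_nonneg measurableSet_Ioi fun t ht =>
    mul_nonneg (pow_nonneg (hw.trans ht.le) k) (exp_pos _).le

lemma phiAux_le (k : ℕ) {b x w : ℝ} (hb : 0 < b) (hbx : b ≤ x) (hw : 0 ≤ w) :
    phiAux k x w ≤ phiAux k b 0 := by
  have hx : 0 < x := lt_of_lt_of_le hb hbx
  calc phiAux k x w ≤ phiAux k b w := by
        refine setIntegral_mono_on ((integrableOn_pow_mul_exp k hx w))
          ((integrableOn_pow_mul_exp k hb w)) measurableSet_Ioi fun t ht => ?_
        have ht0 : 0 ≤ t := hw.trans (le_of_lt ht)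
        exact mul_le_mul_of_nonneg_left
          (exp_le_exp.2 (by nlinarith)) (pow_nonneg ht0 k)
    _ ≤ phiAux k b 0 := by
        refine setIntegral_mono_set (integrableOn_pow_mul_exp k hb 0) ?_
          ((Ioi_subset_Ioi hw).eventuallyLE)
        filter_upwards [ae_restrict_mem measurableSet_Ioi] with t ht
        exact mul_nonneg (pow_nonneg (le_of_lt ht) k) (exp_pos _).le

lemma phiAux_aesm (μ : Measure ℝ) (k : ℕ) {s : ℝ} (hs : 0 < s) :
    AEStronglyMeasurable (fun w => phiAux k s w) (μ.restrict (Set.Ici 0)) := by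
  have hant : Antitone (fun w : ℝ => phiAux k s (max w 0)) := by
    intro w1 w2 h12
    refine setIntegral_mono_set (integrableOn_pow_mul_exp k hs _) ?_
      ((Ioi_subset_Ioi (max_le_max h12 le_rfl)).eventuallyLE)
    filter_upwards [ae_restrict_mem measurableSet_Ioi] with t ht
    exact mul_nonneg (pow_nonneg ((le_max_right w1 0).trans ht.le) k) (exp_pos _).le
  refine hant.measurable.aestronglyMeasurable.congr ?_
  filter_upwards [self_mem_ae_restrict measurableSet_Ici] with w hw
  rw [max_eq_left hw]

lemma phiAux_integrable (μ : Measure ℝ) [IsFiniteMeasure μ] (k : ℕ) {s : ℝ} (hs : 0 < s) :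
    Integrable (fun w => phiAux k s w) (μ.restrict (Set.Ici 0)) := by
  refine (integrable_const (phiAux k s 0)).mono' (phiAux_aesm μ k hs) ?_
  filter_upwards [self_mem_ae_restrict measurableSet_Ici] with w hw
  rw [Real.norm_eq_abs, abs_of_nonneg (phiAux_nonneg k hw)]
  exact phiAux_le k hs le_rfl hw

lemma hasDerivAt_phiAux (k : ℕ) {s w : ℝ} (hs : 0 < s) (hw : 0 ≤ w) :
    HasDerivAt (fun x => phiAux k x w) (-(phiAux (k + 1) s w)) s := by
  have key := hasDerivAt_integral_of_dominated_loc_of_deriv_le (μ := volume.restrict (Ioi w))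
    (F := fun (x t : ℝ) => t ^ k * Real.exp (-(x * t)))
    (F' := fun (x t : ℝ) => -(t ^ (k + 1) * Real.exp (-(x * t))))
    (bound := fun t => t ^ (k + 1) * Real.exp (-(s / 2 * t)))
    (Metric.ball_mem_nhds s (half_pos hs))
    (Eventually.of_forall fun x =>
      (((continuous_pow k).mul (by fun_prop)).aestronglyMeasurable))
    (integrableOn_pow_mul_exp k hs w)
    ((((continuous_pow (k + 1)).mul (by fun_prop)).neg).aestronglyMeasurable)
    ?_ (integrableOn_pow_mul_exp (k + 1) (half_pos hs) w) ?_
  · have h2 := key.2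
    rw [integral_neg] at h2
    exact h2
  · filter_upwards [ae_restrict_mem measurableSet_Ioi] with t ht x hx
    have ht0 : 0 ≤ t := hw.trans ht.le
    rw [Metric.mem_ball, Real.dist_eq] at hx
    have hx2 : s / 2 ≤ x := by
      rcases abs_lt.1 hx with ⟨h1, h2⟩; linarith
    rw [norm_neg, norm_mul, norm_pow, Real.norm_eq_abs, Real.norm_eq_abs,
      abs_of_nonneg ht0, abs_exp]
    exact mul_le_mul_of_nonneg_left (exp_le_exp.2 (by nlinarith)) (pow_nonneg ht0 _)
  · filter_upwards [ae_restrict_mem measurableSet_Ioi] with t ht x hx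
    have h1 : HasDerivAt (fun y : ℝ => -(y * t)) (-t) x := by
      exact (((hasDerivAt_id' x).mul_const t).neg).congr_deriv (by simp)
    have h2 := (h1.exp).const_mul (t ^ k)
    refine h2.congr_deriv ?_
    rw [pow_succ]; ring

lemma hasDerivAt_outer (μ : Measure ℝ) [IsFiniteMeasure μ] (k : ℕ) {s : ℝ} (hs : 0 < s) :
    HasDerivAt (fun x => ∫ w in Set.Ici (0:ℝ), phiAux k x w ∂μ)
      (-(∫ w in Set.Ici (0:ℝ), phiAux (k + 1) s w ∂μ)) s := by
  have key := hasDerivAt_integral_of_dominated_loc_of_deriv_le (μ := μ.restrict (Set.Ici 0))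
    (F := fun x w => phiAux k x w)
    (F' := fun x w => -(phiAux (k + 1) x w))
    (bound := fun _ => phiAux (k + 1) (s / 2) 0)
    (Metric.ball_mem_nhds s (half_pos hs))
    ?_ (phiAux_integrable μ k hs)
    ((phiAux_aesm μ (k + 1) hs).neg)
    ?_ (integrable_const _) ?_
  · have h2 := key.2
    rw [integral_neg] at h2
    exact h2
  · filter_upwards [Ioi_mem_nhds hs] with x hx
    exact phiAux_aesm μ k hx
  · filter_upwards [self_mem_ae_restrict measurableSet_Ici] with w hw x hx
    rw [Metric.mem_ball, Real.dist_eq] at hx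
    have hx2 : s / 2 ≤ x := by rcases abs_lt.1 hx with ⟨h1, h2⟩; linarith
    rw [norm_neg, Real.norm_eq_abs, abs_of_nonneg (phiAux_nonneg _ hw)]
    exact phiAux_le (k + 1) (half_pos hs) hx2 hw
  · filter_upwards [self_mem_ae_restrict measurableSet_Ici] with w hw x hx
    rw [Metric.mem_ball, Real.dist_eq] at hx
    have hx0 : 0 < x := by rcases abs_lt.1 hx with ⟨h1, h2⟩; linarith
    exact hasDerivAt_phiAux k hx0 hw

lemma iteratedDeriv_outer (μ : Measure ℝ) [IsFiniteMeasure μ] (k : ℕ) :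
    ∀ s : ℝ, 0 < s →
      iteratedDeriv k (fun x => ∫ w in Set.Ici (0:ℝ), phiAux 0 x w ∂μ) s =
        (-1 : ℝ) ^ k * ∫ w in Set.Ici (0:ℝ), phiAux k s w ∂μ := by
  induction k with
  | zero => intro s _; simp
  | succ k ih =>
    intro s hs
    rw [iteratedDeriv_succ]
    have heq : (iteratedDeriv k fun x => ∫ w in Set.Ici (0:ℝ), phiAux 0 x w ∂μ) =ᶠ[nhds s]
        (fun x => (-1 : ℝ) ^ k * ∫ w in Set.Ici (0:ℝ), phiAux k x w ∂μ) := by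
      filter_upwards [Ioi_mem_nhds hs] with x hx
      exact ih x hx
    rw [heq.deriv_eq, ((hasDerivAt_outer μ k hs).const_mul ((-1:ℝ) ^ k)).deriv]
    rw [pow_succ]; ring

lemma phiAux_zero_eq {s : ℝ} (hs : 0 < s) (w : ℝ) :
    phiAux 0 s w = Real.exp (-(s * w)) / s := by
  have h := integral_comp_mul_left_Ioi (fun u => Real.exp (-u)) w hs
  simp only [phiAux, pow_zero, one_mul]
  rw [h, integral_exp_neg_Ioi, smul_eq_mul]
  field_simp

lemma iteratedDeriv_congr_nhds {f g : ℝ → ℝ} {a : ℝ} (h : f =ᶠ[nhds a] g) (n : ℕ) :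
    iteratedDeriv n f a = iteratedDeriv n g a := by
  have : ∀ n : ℕ, iteratedDeriv n f =ᶠ[nhds a] iteratedDeriv n g := by
    intro n
    induction n with
    | zero => simpa using h
    | succ n ih => simpa only [iteratedDeriv_succ] using ih.deriv
  exact (this n).eq_of_nhds

lemma upperIncGamma_eq_phiAux (m : ℕ) (hm : 1 ≤ m) {a : ℝ} (ha : 0 < a) {w : ℝ} :
    upperIncGamma m (a * w) = a ^ m * phiAux (m - 1) a w := by
  have h := integral_comp_mul_left_Ioi (fun t => t ^ (m - 1) * Real.exp (-t)) w ha
  rw [smul_eq_mul] at h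
  have h2 : ∫ x in Ioi w, (a * x) ^ (m - 1) * Real.exp (-(a * x)) =
      a ^ (m - 1) * phiAux (m - 1) a w := by
    rw [phiAux, ← integral_const_mul]
    congr 1 with x
    rw [mul_pow]; ring
  rw [show ∫ x in Ioi w, (fun t => t ^ (m - 1) * Real.exp (-t)) (a * x)
      = ∫ x in Ioi w, (a * x) ^ (m - 1) * Real.exp (-(a * x)) from rfl, h2] at h
  field_simp at h
  rw [upperIncGamma, show (∫ t in Ioi (a * w), t ^ (m - 1) * Real.exp (-t))
      = ∫ x in Ioi (a * w), (fun t => t ^ (m - 1) * Real.exp (-t)) x from rfl, ← h,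
    show a ^ m = a ^ (m - 1) * a by rw [← pow_succ, Nat.sub_add_cancel hm]]
  ring

/-- For a finite Borel measure `μ` on `[0, ∞)` with Laplace transform
`L(a) = ∫_0^∞ e^{-aw} dμ(w)`, one has
`∫_0^∞ Γ(m, aw) dμ(w) = (-1)^{m-1} a^m D^{(m-1)}[s ↦ L(s)/s](a)` for every `a > 0`. -/
theorem integral_upperIncGamma_eq_iteratedDeriv (μ : Measure ℝ) [IsFiniteMeasure μ]
    (m : ℕ) (hm : 1 ≤ m) (a : ℝ) (ha : 0 < a) :
    ∫ w in Set.Ici (0 : ℝ), upperIncGamma m (a * w) ∂μ =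
      (-1 : ℝ) ^ (m - 1) * a ^ m *
        iteratedDeriv (m - 1)
          (fun s : ℝ => (∫ w in Set.Ici (0 : ℝ), Real.exp (-s * w) ∂μ) / s) a := by
  obtain ⟨k, rfl⟩ : ∃ k, m = k + 1 := ⟨m - 1, (Nat.succ_pred_eq_of_pos hm).symm⟩
  have hfg : (fun s : ℝ => (∫ w in Set.Ici (0:ℝ), Real.exp (-s * w) ∂μ) / s) =ᶠ[nhds a]
      (fun x => ∫ w in Set.Ici (0:ℝ), phiAux 0 x w ∂μ) := by
    filter_upwards [Ioi_mem_nhds ha] with x hx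
    have hpt : ∀ w : ℝ, phiAux 0 x w = Real.exp (-x * w) / x := fun w => by
      rw [phiAux_zero_eq hx, neg_mul]
    simp only [hpt]
    rw [integral_div]
  have hL : ∫ w in Set.Ici (0:ℝ), upperIncGamma (k + 1) (a * w) ∂μ =
      a ^ (k + 1) * ∫ w in Set.Ici (0:ℝ), phiAux k a w ∂μ := by
    rw [← integral_const_mul]
    refine setIntegral_congr_fun measurableSet_Ici fun w _ => ?_
    exact upperIncGamma_eq_phiAux (k + 1) (Nat.le_add_left 1 k) ha
  rw [hL, show (k + 1) - 1 = k from rfl, iteratedDeriv_congr_nhds hfg k,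
    iteratedDeriv_outer μ k a ha]
  have hsq : ((-1:ℝ)) ^ k * (-1) ^ k = 1 := by rw [← mul_pow]; norm_num
  set I := ∫ w in Set.Ici (0:ℝ), phiAux k a w ∂μ
  calc a ^ (k + 1) * I = ((-1:ℝ) ^ k * (-1) ^ k) * (a ^ (k + 1) * I) := by rw [hsq, one_mul]
  _ = (-1:ℝ) ^ k * a ^ (k + 1) * ((-1) ^ k * I) := by ring
end

section
/- For every real constant c, the function z ↦ c·z + z·ln(1 + z) + (2 + z)·ln(z) is strictly concave on the interval (0, 1]. -/
open Real

private lemma hasDerivAt_f (c : ℝ) {x : ℝ} (hx : 0 < x) :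
    HasDerivAt (fun z : ℝ => c * z + z * Real.log (1 + z) + (2 + z) * Real.log z)
      (c + Real.log (1 + x) + x / (1 + x) + Real.log x + (2 + x) / x) x := by
  have h1 : (0:ℝ) < 1 + x := by linarith
  have hlog1 : HasDerivAt (fun z : ℝ => Real.log (1 + z)) (1 / (1 + x)) x := by
    have : HasDerivAt (fun z : ℝ => 1 + z) 1 x := (hasDerivAt_id x).const_add 1
    simpa using (this.log h1.ne')
  have hlogx : HasDerivAt Real.log (1 / x) x := by
    simpa [one_div] using Real.hasDerivAt_log hx.ne'
  have hA : HasDerivAt (fun z : ℝ => c * z) c x := by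
    simpa using (hasDerivAt_id x).const_mul c
  have hB : HasDerivAt (fun z : ℝ => z * Real.log (1 + z))
      (1 * Real.log (1 + x) + x * (1 / (1 + x))) x := (hasDerivAt_id x).mul hlog1
  have hC : HasDerivAt (fun z : ℝ => (2 + z) * Real.log z)
      (1 * Real.log x + (2 + x) * (1 / x)) x := by
    have h2 : HasDerivAt (fun z : ℝ => 2 + z) 1 x := (hasDerivAt_id x).const_add 2
    exact h2.mul hlogx
  have : HasDerivAt (fun z : ℝ => c * z + z * Real.log (1 + z) + (2 + z) * Real.log z) _ x :=
    (hA.add hB).add hC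
  convert this using 1
  ring

private lemma hasDerivAt_g (c : ℝ) {x : ℝ} (hx : 0 < x) :
    HasDerivAt (fun z : ℝ => c + Real.log (1 + z) + z / (1 + z) + Real.log z + (2 + z) / z)
      (1 / (1 + x) + 1 / (1 + x) ^ 2 + 1 / x - 2 / x ^ 2) x := by
  have h1 : (0:ℝ) < 1 + x := by linarith
  have hid1 : HasDerivAt (fun z : ℝ => 1 + z) 1 x := (hasDerivAt_id x).const_add 1
  have hlog1 : HasDerivAt (fun z : ℝ => c + Real.log (1 + z)) (1 / (1 + x)) x := by
    simpa using (hid1.log h1.ne').const_add c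
  have hdiv1 : HasDerivAt (fun z : ℝ => z / (1 + z))
      ((1 * (1 + x) - x * 1) / (1 + x) ^ 2) x := (hasDerivAt_id x).div hid1 h1.ne'
  have hlogx : HasDerivAt Real.log (1 / x) x := by
    simpa [one_div] using Real.hasDerivAt_log hx.ne'
  have hid2 : HasDerivAt (fun z : ℝ => 2 + z) 1 x := (hasDerivAt_id x).const_add 2
  have hdiv2 : HasDerivAt (fun z : ℝ => (2 + z) / z)
      ((1 * x - (2 + x) * 1) / x ^ 2) x := hid2.div (hasDerivAt_id x) hx.ne'
  have : HasDerivAt (fun z : ℝ => c + Real.log (1 + z) + z / (1 + z) + Real.log z + (2 + z) / z)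
      _ x := ((hlog1.add hdiv1).add hlogx).add hdiv2
  convert this using 1
  ring

/-- For every real constant `c`, the function
`z ↦ c·z + z·ln(1+z) + (2+z)·ln z` is strictly concave on `(0, 1]`. -/
theorem strictConcaveOn_capacity_core (c : ℝ) :
    StrictConcaveOn ℝ (Set.Ioc (0 : ℝ) 1)
      (fun z : ℝ => c * z + z * Real.log (1 + z) + (2 + z) * Real.log z) := by
  set f : ℝ → ℝ := fun z : ℝ => c * z + z * Real.log (1 + z) + (2 + z) * Real.log z with hf
  set g : ℝ → ℝ := fun z : ℝ => c + Real.log (1 + z) + z / (1 + z) + Real.log z + (2 + z) / z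
    with hg
  apply strictConcaveOn_of_deriv2_neg (convex_Ioc 0 1)
  · -- continuity
    apply ContinuousOn.add
    apply ContinuousOn.add
    · exact continuousOn_const.mul continuousOn_id
    · exact continuousOn_id.mul <| ContinuousOn.log (by fun_prop)
        (fun x hx => by have := hx.1; positivity)
    · exact (continuousOn_const.add continuousOn_id).mul <| ContinuousOn.log continuousOn_id
        (fun x hx => ne_of_gt hx.1)
  · intro x hx
    rw [interior_Ioc] at hx
    obtain ⟨hx0, hx1⟩ := hx
    have h1 : (0:ℝ) < 1 + x := by linarith
    have hev : ∀ᶠ z in nhds x, deriv f z = g z := by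
      filter_upwards [isOpen_Ioi.mem_nhds (Set.mem_Ioi.mpr hx0)] with z hz
      exact (hasDerivAt_f c hz).deriv
    have hd2 : deriv (deriv f) x = 1 / (1 + x) + 1 / (1 + x) ^ 2 + 1 / x - 2 / x ^ 2 := by
      rw [Filter.EventuallyEq.deriv_eq hev]
      exact (hasDerivAt_g c hx0).deriv
    simp only [Function.iterate_succ, Function.iterate_zero, Function.comp_apply, id_eq]
    rw [hd2]
    have heq : 1 / (1 + x) + 1 / (1 + x) ^ 2 + 1 / x - 2 / x ^ 2
        = (2 * x ^ 3 + 2 * x ^ 2 - 3 * x - 2) / (x ^ 2 * (1 + x) ^ 2) := by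
      field_simp
      ring
    rw [heq]
    apply div_neg_of_neg_of_pos
    · nlinarith [mul_pos hx0 hx0, mul_pos (mul_pos hx0 hx0) hx0]
    · positivity
end
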